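/- Fix c > 0 and let ψ(y) = sech²(cy/2) and G(y,0,1) be the Green's function at t = 1, y-variable as first argument. There exist ε₀, C > 0 such that for every φ₀ ∈ L^∞(ℝ) with ‖φ₀‖_∞ ≤ ε₀, there is a unique p₀ ∈ ℝ with |p₀| ≤ C‖φ₀‖_∞ satisfying ∫_ℝ ψ(y)[φ₀(y) − log(1 + p₀ G(y,0,1))] dy = 0. -/

import Mathlib

open MeasureTheory Real Filter

noncomputable def errfn (z : ℝ) : ℝ :=
  (Real.sqrt Real.pi)⁻¹ * ∫ s in Set.Iio z, Real.exp (-s ^ 2)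

noncomputable def psi (c y : ℝ) : ℝ := (1 / Real.cosh (c * y / 2)) ^ 2

noncomputable def Grn (c x y t : ℝ) : ℝ :=
  (Real.sqrt (4 * Real.pi * t))⁻¹ * Real.exp (-(x - y + c * t) ^ 2 / (4 * t)) /
      (1 + Real.exp (c * y))
    + (Real.sqrt (4 * Real.pi * t))⁻¹ * Real.exp (-(x - y - c * t) ^ 2 / (4 * t)) /
      (1 + Real.exp (-(c * y)))
    + c / 4 *
      (errfn ((y - x + c * t) / Real.sqrt (4 * t)) -
        errfn ((y - x - c * t) / Real.sqrt (4 * t))) * psi c y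

noncomputable def eFun (c x t : ℝ) : ℝ :=
  c / 4 *
    (errfn ((x + c * t) / Real.sqrt (4 * t)) - errfn ((x - c * t) / Real.sqrt (4 * t)))

/-!
Let `F p = ∫ ψ log (1 + p G)` (`logPhase`) with `G = G(·,0,1)`. Since `0 < G ≤ 1 + c/4`, for
`|p| ≤ R = (2 (1 + c/4))⁻¹` the argument `p G` stays in `[-1/2, 1/2]`, where `log (1 + t)` has
slopes between `2/3` and `2`. Hence on `[-R, R]` the map `F` is Lipschitz and expanding:
`F q - F p ≥ k (q - p)` with `k = (2/3) ∫ ψ G > 0`. The equation reads `F p = a := ∫ ψ φ₀`,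
where `|a| ≤ ‖ψ‖₁ ‖φ₀‖_∞`; the intermediate value theorem gives a root with `k |p| ≤ |a|`, and
expansion makes it unique. This quantitative monotonicity replaces the implicit function theorem.
-/

lemma Real.log_one_add_sub_log_one_add_bounds {s t : ℝ} (hs : -(1 / 2) ≤ s) (hst : s ≤ t)
    (ht : t ≤ 1 / 2) :
    2 / 3 * (t - s) ≤ log (1 + t) - log (1 + s) ∧ log (1 + t) - log (1 + s) ≤ 2 * (t - s) := by
  have hs1 : 0 < 1 + s := by linarith
  have ht1 : 0 < 1 + t := by linarith
  have hx : 0 < (1 + t) / (1 + s) := div_pos ht1 hs1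
  rw [← Real.log_div ht1.ne' hs1.ne']
  constructor
  · calc 2 / 3 * (t - s) ≤ (t - s) / (1 + t) := by
          rw [le_div_iff₀ ht1]; nlinarith
      _ = 1 - ((1 + t) / (1 + s))⁻¹ := by field_simp; ring
      _ ≤ log ((1 + t) / (1 + s)) := Real.one_sub_inv_le_log_of_pos hx
  · calc log ((1 + t) / (1 + s)) ≤ (1 + t) / (1 + s) - 1 := Real.log_le_sub_one_of_pos hx
      _ = (t - s) / (1 + s) := by field_simp; ring
      _ ≤ 2 * (t - s) := by rw [div_le_iff₀ hs1]; nlinarith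

lemma Real.abs_log_one_add_le_one {t : ℝ} (ht : |t| ≤ 1 / 2) : |log (1 + t)| ≤ 1 := by
  obtain ⟨ht₁, ht₂⟩ := abs_le.mp ht
  rcases le_total 0 t with h | h
  · have := Real.log_one_add_sub_log_one_add_bounds (by norm_num) h ht₂
    simp only [add_zero, Real.log_one, sub_zero] at this
    rw [abs_le]; constructor <;> linarith
  · have := Real.log_one_add_sub_log_one_add_bounds ht₁ h (by norm_num)
    simp only [add_zero, Real.log_one, zero_sub] at this
    rw [abs_le]; constructor <;> linarith

theorem existsUnique_abs_le_and_eq_of_expanding {F : ℝ → ℝ} {k R B a : ℝ} (hk : 0 < k)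
    (hBR : B ≤ R) (ha : |a| ≤ k * B) (hF0 : F 0 = 0) (hF : ContinuousOn F (Set.Icc (-R) R))
    (hexp : ∀ p ∈ Set.Icc (-R) R, ∀ q ∈ Set.Icc (-R) R, p ≤ q → k * (q - p) ≤ F q - F p) :
    ∃! p, |p| ≤ B ∧ F p = a := by
  have hB : 0 ≤ B := nonneg_of_mul_nonneg_right ((abs_nonneg a).trans ha) hk
  have hBR' : Set.Icc (-B) B ⊆ Set.Icc (-R) R := Set.Icc_subset_Icc (by linarith) hBR
  have hmem : ∀ {p}, |p| ≤ B → p ∈ Set.Icc (-R) R := fun hp => hBR' (abs_le.mp hp)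
  have hB₀ : (0 : ℝ) ∈ Set.Icc (-R) R := hBR' ⟨by linarith, hB⟩
  have hB₁ : B ∈ Set.Icc (-R) R := hBR' ⟨by linarith, le_rfl⟩
  have hB₂ : -B ∈ Set.Icc (-R) R := hBR' ⟨le_rfl, by linarith⟩
  have hmono : StrictMonoOn F (Set.Icc (-R) R) := fun p hp q hq hpq => by
    nlinarith [hexp p hp q hq hpq.le]
  have hlow : F (-B) ≤ a := by
    have := hexp (-B) hB₂ 0 hB₀ (by linarith)
    linarith [neg_abs_le a]
  have hup : a ≤ F B := by
    have := hexp 0 hB₀ B hB₁ hB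
    linarith [le_abs_self a]
  obtain ⟨p, hp, hFp⟩ := intermediate_value_Icc (by linarith) (hF.mono hBR') ⟨hlow, hup⟩
  refine ⟨p, ⟨abs_le.mpr hp, hFp⟩, fun q ⟨hq, hFq⟩ => ?_⟩
  exact hmono.injOn (hmem hq) (hBR' hp) (hFq.trans hFp.symm)

lemma abs_mul_le_half {M R p y : ℝ} (hRM : R * M ≤ 1 / 2) (hp : p ∈ Set.Icc (-R) R)
    (hy0 : 0 ≤ y) (hyM : y ≤ M) : |p * y| ≤ 1 / 2 := by
  rw [abs_mul, abs_of_nonneg hy0]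
  have hR : 0 ≤ R := by linarith [hp.1, hp.2]
  calc |p| * y ≤ R * M := mul_le_mul (abs_le.mpr hp) hyM hy0 hR
    _ ≤ 1 / 2 := hRM

section LogPhase

variable {α : Type*} [MeasurableSpace α] {μ : Measure α} {w g φ : α → ℝ} {M R : ℝ}

lemma integral_pos_of_forall_pos [NeZero μ] {f : α → ℝ} (hf : Integrable f μ)
    (hpos : ∀ x, 0 < f x) : 0 < ∫ x, f x ∂μ := by
  rw [integral_pos_iff_support_of_nonneg (fun x => (hpos x).le) hf,
    Function.support_eq_univ fun x => (hpos x).ne']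
  exact Measure.measure_univ_pos.mpr (NeZero.ne μ)

lemma abs_integral_mul_le_integral_mul_eLpNorm_top (hw : Integrable w μ) (hw0 : ∀ x, 0 ≤ w x)
    (hφ : MemLp φ ⊤ μ) :
    |∫ x, w x * φ x ∂μ| ≤ (∫ x, w x ∂μ) * (eLpNorm φ ⊤ μ).toReal := by
  rw [← integral_mul_const, ← Real.norm_eq_abs]
  refine norm_integral_le_of_norm_le (hw.mul_const _) ?_
  filter_upwards [ae_le_lpNorm_exponent_top hφ] with x hx
  rw [norm_mul, Real.norm_of_nonneg (hw0 x), toReal_eLpNorm hφ.aestronglyMeasurable]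
  exact mul_le_mul_of_nonneg_left hx (hw0 x)

lemma integrable_mul_of_le (hw : Integrable w μ) (hg : AEMeasurable g μ) (hg0 : ∀ x, 0 ≤ g x)
    (hgM : ∀ x, g x ≤ M) : Integrable (fun x => w x * g x) μ :=
  hw.mul_bdd hg.aestronglyMeasurable (ae_of_all _ fun x => (abs_of_nonneg (hg0 x)).trans_le (hgM x))

noncomputable def logPhase (μ : Measure α) (w g : α → ℝ) (p : ℝ) : ℝ :=
  ∫ x, w x * log (1 + p * g x) ∂μ

lemma logPhase_zero : logPhase μ w g 0 = 0 := by simp [logPhase]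

lemma integrable_mul_log_one_add (hw : Integrable w μ) (hg : AEMeasurable g μ)
    (hg0 : ∀ x, 0 ≤ g x) (hgM : ∀ x, g x ≤ M) (hRM : R * M ≤ 1 / 2) {p : ℝ}
    (hp : p ∈ Set.Icc (-R) R) :
    Integrable (fun x => w x * log (1 + p * g x)) μ :=
  hw.mul_bdd (Real.measurable_log.comp_aemeasurable (by fun_prop)).aestronglyMeasurable
    (ae_of_all _ fun x => Real.abs_log_one_add_le_one (abs_mul_le_half hRM hp (hg0 x) (hgM x)))

lemma logPhase_sub_bounds (hw : Integrable w μ) (hw0 : ∀ x, 0 ≤ w x) (hg : AEMeasurable g μ)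
    (hg0 : ∀ x, 0 ≤ g x) (hgM : ∀ x, g x ≤ M) (hRM : R * M ≤ 1 / 2) {p q : ℝ}
    (hp : p ∈ Set.Icc (-R) R) (hq : q ∈ Set.Icc (-R) R) (hpq : p ≤ q) :
    2 / 3 * (∫ x, w x * g x ∂μ) * (q - p) ≤ logPhase μ w g q - logPhase μ w g p ∧
      logPhase μ w g q - logPhase μ w g p ≤ 2 * (∫ x, w x * g x ∂μ) * (q - p) := by
  have hwg := integrable_mul_of_le hw hg hg0 hgM
  have hsub : logPhase μ w g q - logPhase μ w g p =
      ∫ x, w x * (log (1 + q * g x) - log (1 + p * g x)) ∂μ := by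
    rw [logPhase, logPhase, ← integral_sub (integrable_mul_log_one_add hw hg hg0 hgM hRM hq)
      (integrable_mul_log_one_add hw hg hg0 hgM hRM hp)]
    simp only [mul_sub]
  have hdiff : ∀ x, 2 / 3 * (q - p) * (w x * g x) ≤ w x * (log (1 + q * g x) - log (1 + p * g x)) ∧
      w x * (log (1 + q * g x) - log (1 + p * g x)) ≤ 2 * (q - p) * (w x * g x) := by
    intro x
    obtain ⟨h₁, h₂⟩ := Real.log_one_add_sub_log_one_add_bounds
      (abs_le.mp (abs_mul_le_half hRM hp (hg0 x) (hgM x))).1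
      (mul_le_mul_of_nonneg_right hpq (hg0 x))
      (abs_le.mp (abs_mul_le_half hRM hq (hg0 x) (hgM x))).2
    constructor
    · nlinarith [mul_le_mul_of_nonneg_left h₁ (hw0 x)]
    · nlinarith [mul_le_mul_of_nonneg_left h₂ (hw0 x)]
  have hdiff_int : Integrable (fun x => w x * (log (1 + q * g x) - log (1 + p * g x))) μ := by
    simpa only [mul_sub, Pi.sub_def] using (integrable_mul_log_one_add hw hg hg0 hgM hRM hq).sub
      (integrable_mul_log_one_add hw hg hg0 hgM hRM hp)
  rw [hsub, mul_right_comm (2 / 3 : ℝ), mul_right_comm (2 : ℝ), ← integral_const_mul,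
    ← integral_const_mul]
  exact ⟨integral_mono (hwg.const_mul _) hdiff_int fun x => (hdiff x).1,
    integral_mono hdiff_int (hwg.const_mul _) fun x => (hdiff x).2⟩

lemma continuousOn_logPhase (hw : Integrable w μ) (hw0 : ∀ x, 0 ≤ w x) (hg : AEMeasurable g μ)
    (hg0 : ∀ x, 0 ≤ g x) (hgM : ∀ x, g x ≤ M) (hRM : R * M ≤ 1 / 2) :
    ContinuousOn (logPhase μ w g) (Set.Icc (-R) R) := by
  have hI : 0 ≤ ∫ x, w x * g x ∂μ := integral_nonneg fun x => mul_nonneg (hw0 x) (hg0 x)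
  refine (LipschitzOnWith.of_le_add_mul' (2 * ∫ x, w x * g x ∂μ) fun p hp q hq => ?_).continuousOn
  rcases le_total p q with hpq | hqp
  · have := (logPhase_sub_bounds hw hw0 hg hg0 hgM hRM hp hq hpq).1
    nlinarith [dist_nonneg (x := p) (y := q)]
  · have := (logPhase_sub_bounds hw hw0 hg hg0 hgM hRM hq hp hqp).2
    rw [Real.dist_eq, abs_of_nonneg (sub_nonneg.mpr hqp)]
    linarith

lemma integral_mul_sub_log_eq_zero_iff (hw : Integrable w μ) (hg : AEMeasurable g μ)
    (hg0 : ∀ x, 0 ≤ g x) (hgM : ∀ x, g x ≤ M) (hRM : R * M ≤ 1 / 2) (hφ : MemLp φ ⊤ μ)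
    {p : ℝ} (hp : p ∈ Set.Icc (-R) R) :
    ∫ x, w x * (φ x - log (1 + p * g x)) ∂μ = 0 ↔ logPhase μ w g p = ∫ x, w x * φ x ∂μ := by
  have hwφ : Integrable (fun x => w x * φ x) μ := hw.mul_of_top_left hφ
  simp only [mul_sub]
  rw [integral_sub hwφ (integrable_mul_log_one_add hw hg hg0 hgM hRM hp),
    sub_eq_zero, logPhase, eq_comm]

end LogPhase

lemma integrable_exp_neg_sq : Integrable fun s : ℝ => exp (-s ^ 2) := by
  simpa using integrable_exp_neg_mul_sq (b := 1) one_pos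

lemma errfn_nonneg (z : ℝ) : 0 ≤ errfn z :=
  mul_nonneg (by positivity) (setIntegral_nonneg measurableSet_Iio fun _ _ => (exp_pos _).le)

lemma errfn_mono : Monotone errfn := fun a b hab =>
  mul_le_mul_of_nonneg_left (setIntegral_mono_set integrable_exp_neg_sq.integrableOn
    (ae_of_all _ fun _ => (exp_pos _).le) (Set.Iio_subset_Iio hab).eventuallyLE) (by positivity)

lemma errfn_le_one (z : ℝ) : errfn z ≤ 1 := by
  have h : ∫ s in Set.Iio z, exp (-s ^ 2) ≤ √π := by
    calc ∫ s in Set.Iio z, exp (-s ^ 2) ≤ ∫ s, exp (-s ^ 2) :=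
          setIntegral_le_integral integrable_exp_neg_sq (ae_of_all _ fun _ => (exp_pos _).le)
      _ = √π := by simpa using integral_gaussian 1
  rw [errfn, inv_mul_le_iff₀ (by positivity), mul_one]
  exact h

lemma psi_eq (c y : ℝ) : psi c y = (cosh (c * y / 2) ^ 2)⁻¹ := by
  rw [psi, one_div, inv_pow]

lemma psi_pos (c y : ℝ) : 0 < psi c y := by
  rw [psi_eq]; have := cosh_pos (c * y / 2); positivity

lemma psi_le_inv_one_add_sq (c y : ℝ) : psi c y ≤ (1 + (c / 2 * y) ^ 2)⁻¹ := by
  have hu : (c / 2 * y) ^ 2 ≤ sinh (c * y / 2) ^ 2 := by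
    rw [sq_le_sq, abs_sinh, show c / 2 * y = c * y / 2 by ring]
    exact self_le_sinh_iff.mpr (abs_nonneg _)
  rw [psi_eq, cosh_sq']
  exact inv_anti₀ (by positivity) (by linarith)

lemma integrable_psi {c : ℝ} (hc : c ≠ 0) : Integrable (psi c) := by
  refine (integrable_inv_one_add_sq.comp_mul_left' (div_ne_zero hc two_ne_zero)).mono'
    (by rw [funext (psi_eq c)]; fun_prop) (ae_of_all _ fun y => ?_)
  rw [Real.norm_of_nonneg (psi_pos c y).le]
  exact psi_le_inv_one_add_sq c y

lemma Grn_zero_one (c y : ℝ) : Grn c y 0 1 =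
    (√(4 * π))⁻¹ * (exp (-(y + c) ^ 2 / 4) + exp (-(y - c) ^ 2 / 4)) / 2
      + c / 4 * (errfn ((-y + c) / 2) - errfn ((-y - c) / 2)) := by
  have h4 : √(4 : ℝ) = 2 := by
    rw [show (4 : ℝ) = 2 ^ 2 by norm_num, Real.sqrt_sq zero_le_two]
  simp [Grn, psi, h4]
  ring

lemma Grn_pos {c : ℝ} (hc : 0 ≤ c) (y : ℝ) : 0 < Grn c y 0 1 := by
  have herr : errfn ((-y - c) / 2) ≤ errfn ((-y + c) / 2) := errfn_mono (by linarith)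
  have hsqrt : 0 < √(4 * π) := by positivity
  have herr_term : 0 ≤ c / 4 * (errfn ((-y + c) / 2) - errfn ((-y - c) / 2)) :=
    mul_nonneg (by positivity) (sub_nonneg.mpr herr)
  rw [Grn_zero_one]
  positivity

lemma Grn_le {c : ℝ} (hc : 0 ≤ c) (y : ℝ) : Grn c y 0 1 ≤ 1 + c / 4 := by
  have hsqrt : 1 ≤ √(4 * π) := Real.one_le_sqrt.mpr (by nlinarith [pi_gt_three])
  have hexp : exp (-(y + c) ^ 2 / 4) + exp (-(y - c) ^ 2 / 4) ≤ 2 := by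
    have h₁ : exp (-(y + c) ^ 2 / 4) ≤ 1 := exp_le_one_iff.mpr (by nlinarith [sq_nonneg (y + c)])
    have h₂ : exp (-(y - c) ^ 2 / 4) ≤ 1 := exp_le_one_iff.mpr (by nlinarith [sq_nonneg (y - c)])
    linarith
  have herr : errfn ((-y + c) / 2) - errfn ((-y - c) / 2) ≤ 1 := by
    linarith [errfn_le_one ((-y + c) / 2), errfn_nonneg ((-y - c) / 2)]
  rw [Grn_zero_one]
  have hgauss : (√(4 * π))⁻¹ * (exp (-(y + c) ^ 2 / 4) + exp (-(y - c) ^ 2 / 4)) / 2 ≤ 1 := by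
    rw [div_le_one two_pos]
    simpa using mul_le_mul (inv_le_one_of_one_le₀ hsqrt) hexp (by positivity) zero_le_one
  nlinarith [mul_le_mul_of_nonneg_left herr (by positivity : (0 : ℝ) ≤ c / 4)]

lemma measurable_Grn (c : ℝ) : Measurable fun y => Grn c y 0 1 := by
  simp_rw [Grn_zero_one]
  have herr := errfn_mono.measurable
  fun_prop

theorem initial_phase_selection (c : ℝ) (hc : 0 < c) :
    ∃ ε₀ > 0, ∃ C > 0, ∀ φ₀ : ℝ → ℝ,
      MeasureTheory.MemLp φ₀ ⊤ MeasureTheory.volume →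
      MeasureTheory.eLpNorm φ₀ ⊤ MeasureTheory.volume ≤ ENNReal.ofReal ε₀ →
      ∃! p₀ : ℝ,
        |p₀| ≤ C * (MeasureTheory.eLpNorm φ₀ ⊤ MeasureTheory.volume).toReal ∧
        (∫ y : ℝ, psi c y * (φ₀ y - Real.log (1 + p₀ * Grn c y 0 1))) = 0 := by
  have hψ := integrable_psi hc.ne'
  have hψ0 : ∀ y, 0 ≤ psi c y := fun y => (psi_pos c y).le
  have hG : AEMeasurable (fun y => Grn c y 0 1) := (measurable_Grn c).aemeasurable
  have hG0 : ∀ y, 0 ≤ Grn c y 0 1 := fun y => (Grn_pos hc.le y).le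
  have hGM : ∀ y, Grn c y 0 1 ≤ 1 + c / 4 := Grn_le hc.le
  set R : ℝ := (2 * (1 + c / 4))⁻¹ with hR
  have hRM : R * (1 + c / 4) ≤ 1 / 2 := by rw [hR]; field_simp; norm_num
  set k := 2 / 3 * ∫ y, psi c y * Grn c y 0 1
  have hk : 0 < k := mul_pos (by norm_num) (integral_pos_of_forall_pos
    (integrable_mul_of_le hψ hG hG0 hGM) fun y => mul_pos (psi_pos c y) (Grn_pos hc.le y))
  set J := ∫ y, psi c y
  have hJ : 0 < J := integral_pos_of_forall_pos hψ (psi_pos c)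
  refine ⟨k * R / J, by positivity, J / k, by positivity, fun φ₀ hφ hφε => ?_⟩
  have hB : J / k * (eLpNorm φ₀ ⊤ volume).toReal ≤ R :=
    calc _ ≤ J / k * (k * R / J) := mul_le_mul_of_nonneg_left
          (ENNReal.toReal_le_of_le_ofReal (by positivity) hφε) (by positivity)
      _ = R := by field_simp
  have ha : |∫ y, psi c y * φ₀ y| ≤ k * (J / k * (eLpNorm φ₀ ⊤ volume).toReal) := by
    rw [← mul_assoc, mul_div_cancel₀ _ hk.ne']
    exact abs_integral_mul_le_integral_mul_eLpNorm_top hψ hψ0 hφ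
  refine (existsUnique_congr fun p => and_congr_right fun hp => ?_).mp
    (existsUnique_abs_le_and_eq_of_expanding hk hB ha logPhase_zero
      (continuousOn_logPhase hψ hψ0 hG hG0 hGM hRM)
      fun p hp q hq hpq => (logPhase_sub_bounds hψ hψ0 hG hG0 hGM hRM hp hq hpq).1)
  exact (integral_mul_sub_log_eq_zero_iff hψ hG hG0 hGM hRM hφ (abs_le.mp (hp.trans hB))).symm
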